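/- Let n ∈ ℕ, let κ₁, …, κₙ > 0 be real numbers, and let f : ℝⁿ → ℂ be smooth with temperate growth (for every multi-index γ there exist C > 0 and m ∈ ℕ with |∂^γ f(y)| ≤ C (1 + ‖y‖)^m for all y). Define F(λ, x) = f(λ^{κ₁} x₁, …, λ^{κₙ} xₙ) for λ > 0 and x ∈ ℝⁿ. Then F is smooth on (0,∞) × ℝⁿ, and for every k ∈ ℕ and every multi-index α ∈ ℕⁿ there exist l, m ∈ ℕ and C > 0 such that |∂_λ^k ∂_x^α F(λ, x)| ≤ C (1 + λ^l + λ^{−l})(1 + ‖x‖)^m for all λ > 0 and all x ∈ ℝⁿ. -/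

import Mathlib

/-- Iterated mixed partial derivative of `f` in the directions `e i`, taken `β i` times in the
direction `e i`, for `i : Fin m`. -/
noncomputable def mixedPartial {E F : Type*} [NormedAddCommGroup E] [NormedSpace ℝ E]
    [NormedAddCommGroup F] [NormedSpace ℝ F] {m : ℕ}
    (e : Fin m → E) (β : Fin m → ℕ) (f : E → F) : E → F :=
  (List.finRange m).foldr (fun i g => (fun h x => fderiv ℝ h x (e i))^[β i] g) f

/-- The coordinate directions in `ℝ × ℝⁿ`: the first is the `λ`-direction, the others are the
standard basis vectors of `ℝⁿ`. -/
noncomputable def dirs (n : ℕ) : Fin (n + 1) → ℝ × (Fin n → ℝ) :=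
  Fin.cons ((1 : ℝ), (0 : Fin n → ℝ)) fun i => ((0 : ℝ), Pi.single i (1 : ℝ))

namespace DilProof

variable {E F : Type*} [NormedAddCommGroup E] [NormedSpace ℝ E]
  [NormedAddCommGroup F] [NormedSpace ℝ F]

noncomputable def Dv (v : E) (g : E → F) : E → F := fun x => fderiv ℝ g x v

lemma Dv_contDiff {g : E → F} (hg : ContDiff ℝ (⊤ : ℕ∞) g) (v : E) : ContDiff ℝ (⊤ : ℕ∞) (Dv v g) :=
  (hg.fderiv_right (by simp)).clm_apply contDiff_const

lemma Dv_comm {g : E → F} (hg : ContDiff ℝ (⊤ : ℕ∞) g) (v w : E) : Dv v (Dv w g) = Dv w (Dv v g) := by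
  funext x
  have hdiff : DifferentiableAt ℝ (fderiv ℝ g) x :=
    ((hg.fderiv_right (m := (⊤ : ℕ∞)) (by simp)).differentiable (by simp)).differentiableAt
  have key : ∀ u : E, fderiv ℝ (fun y => fderiv ℝ g y u) x
      = (fderiv ℝ (fderiv ℝ g) x).flip u := by
    intro u
    have := fderiv_clm_apply (c := fderiv ℝ g) (u := fun _ => u) hdiff (differentiableAt_const u)
    simpa using this
  have hsymm : IsSymmSndFDerivAt ℝ g x := hg.contDiffAt.isSymmSndFDerivAt (by
    exact (by rw [minSmoothness_of_isRCLikeNormedField]; exact WithTop.coe_le_coe.2 (le_top : (2 : ℕ∞) ≤ ⊤)))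
  show fderiv ℝ (fun y => fderiv ℝ g y w) x v = fderiv ℝ (fun y => fderiv ℝ g y v) x w
  rw [key w, key v]
  simpa using (hsymm v w)

variable {m : ℕ}

noncomputable def mp (e : Fin m → E) (L : List (Fin m)) (g : E → F) : E → F :=
  L.foldr (fun i h => Dv (e i) h) g

@[simp] lemma mp_nil (e : Fin m → E) (g : E → F) : mp e [] g = g := rfl

@[simp] lemma mp_cons (e : Fin m → E) (i : Fin m) (L : List (Fin m)) (g : E → F) :
    mp e (i :: L) g = Dv (e i) (mp e L g) := rfl

lemma mp_append (e : Fin m → E) (L1 L2 : List (Fin m)) (g : E → F) :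
    mp e (L1 ++ L2) g = mp e L1 (mp e L2 g) := by
  simp [mp, List.foldr_append]

lemma mp_contDiff {g : E → F} (hg : ContDiff ℝ (⊤ : ℕ∞) g) (e : Fin m → E) (L : List (Fin m)) :
    ContDiff ℝ (⊤ : ℕ∞) (mp e L g) := by
  induction L with
  | nil => exact hg
  | cons i L ih => exact Dv_contDiff ih _

lemma Dv_mp {g : E → F} (hg : ContDiff ℝ (⊤ : ℕ∞) g) (e : Fin m → E) (L : List (Fin m)) (v : E) :
    Dv v (mp e L g) = mp e L (Dv v g) := by
  induction L with
  | nil => rfl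
  | cons i L ih => rw [mp_cons, Dv_comm (mp_contDiff hg e L), ih, mp_cons]

lemma mp_perm {g : E → F} (hg : ContDiff ℝ (⊤ : ℕ∞) g) (e : Fin m → E) {L L' : List (Fin m)}
    (h : L.Perm L') : mp e L g = mp e L' g := by
  induction h with
  | nil => rfl
  | cons x _ ih => simp [ih]
  | swap x y l => simpa using Dv_comm (mp_contDiff hg e l) (e y) (e x)
  | trans _ _ ih1 ih2 => rw [ih1, ih2]

/-- the multiset of directions of a multiindex, as a list -/
def multi (β : Fin m → ℕ) : List (Fin m) :=
  (List.finRange m).flatMap fun i => List.replicate (β i) i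

lemma mp_replicate (e : Fin m → E) (i : Fin m) (k : ℕ) (g : E → F) :
    mp e (List.replicate k i) g = (fun h x => fderiv ℝ h x (e i))^[k] g := by
  induction k with
  | zero => rfl
  | succ k ih => rw [List.replicate_succ, mp_cons, ih, Function.iterate_succ']; rfl

lemma mixedPartial_eq_mp (e : Fin m → E) (β : Fin m → ℕ) (g : E → F) :
    mixedPartial e β g = mp e (multi β) g := by
  unfold mixedPartial multi
  induction List.finRange m with
  | nil => rfl
  | cons i L ih => rw [List.foldr_cons, ih, List.flatMap_cons, mp_append, mp_replicate]


lemma multi_add_single_perm (β : Fin m → ℕ) (j : Fin m) :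
    (multi (β + Pi.single j 1)).Perm (multi β ++ [j]) := by
  obtain ⟨s, t, hst⟩ := List.append_of_mem (List.mem_finRange j)
  have hnd := List.nodup_finRange m
  rw [hst] at hnd
  rw [List.nodup_append] at hnd
  have hjs : j ∉ s := fun h => hnd.2.2 j h j (List.mem_cons_self : j ∈ j :: t) rfl
  have hjt : j ∉ t := (List.nodup_cons.1 hnd.2.1).1
  have hcongr : ∀ (L : List (Fin m)), j ∉ L →
      L.flatMap (fun i => List.replicate ((β + (Pi.single j 1 : Fin m → ℕ)) i) i)
        = L.flatMap (fun i => List.replicate (β i) i) := by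
    intro L hL
    induction L with
    | nil => rfl
    | cons a L ih =>
      simp only [List.flatMap_cons]
      rw [ih (fun h => hL (List.mem_cons_of_mem a h))]
      have ha : a ≠ j := fun h => hL (h ▸ (List.mem_cons_self : a ∈ a :: L))
      have : (β + (Pi.single j 1 : Fin m → ℕ)) a = β a := by
        simp [Pi.single_apply, ha]
      rw [this]
  unfold multi
  rw [hst]
  simp only [List.flatMap_append, List.flatMap_cons]
  rw [hcongr s hjs, hcongr t hjt]
  have hrep : (β + (Pi.single j 1 : Fin m → ℕ)) j = β j + 1 := by simp
  rw [hrep]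
  set A := s.flatMap (fun i => List.replicate (β i) i) with hA
  set B := t.flatMap (fun i => List.replicate (β i) i) with hB
  set R := List.replicate (β j) j with hR
  have h1 : List.replicate (β j + 1) j = R ++ [j] := by
    rw [hR, ← List.replicate_succ' ]
  rw [h1]
  have e1 : A ++ (R ++ [j] ++ B) = A ++ (R ++ ([j] ++ B)) := by simp [List.append_assoc]
  have e2 : A ++ (R ++ B) ++ [j] = A ++ (R ++ (B ++ [j])) := by simp [List.append_assoc]
  rw [e1, e2]
  exact List.Perm.append_left A (List.Perm.append_left R List.perm_append_comm)

lemma Dv_mixedPartial {g : E → F} (hg : ContDiff ℝ (⊤ : ℕ∞) g) (e : Fin m → E) (β : Fin m → ℕ)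
    (j : Fin m) :
    Dv (e j) (mixedPartial e β g) = mixedPartial e (β + Pi.single j 1) g := by
  rw [mixedPartial_eq_mp, mixedPartial_eq_mp, Dv_mp hg,
    mp_perm hg e (multi_add_single_perm β j), mp_append]
  rfl

lemma mixedPartial_contDiff {g : E → F} (hg : ContDiff ℝ (⊤ : ℕ∞) g) (e : Fin m → E) (β : Fin m → ℕ) :
    ContDiff ℝ (⊤ : ℕ∞) (mixedPartial e β g) := by
  rw [mixedPartial_eq_mp]; exact mp_contDiff hg e _

@[simp] lemma mixedPartial_zero (e : Fin m → E) (g : E → F) :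
    mixedPartial e 0 g = g := by
  rw [mixedPartial_eq_mp]
  have : multi (0 : Fin m → ℕ) = [] := by
    unfold multi; simp
  rw [this]; rfl


lemma mixedPartial_closure {P : (E → F) → Prop} (e : Fin m → E) (β : Fin m → ℕ) {g : E → F}
    (hg : P g) (hP : ∀ (i : Fin m) (h : E → F), P h → P (Dv (e i) h)) :
    P (mixedPartial e β g) := by
  rw [mixedPartial_eq_mp]
  induction multi β with
  | nil => exact hg
  | cons i L ih => exact hP i _ ih


section Specific

variable {n : ℕ}

noncomputable def bas (n : ℕ) : Fin n → (Fin n → ℝ) := fun i => Pi.single i 1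

noncomputable def dil (κ : Fin n → ℝ) (p : ℝ × (Fin n → ℝ)) : Fin n → ℝ :=
  fun i => p.1 ^ κ i * p.2 i

structure Term (n : ℕ) where
  c : ℝ
  r : ℝ
  β : Fin n → ℕ
  γ : Fin n → ℕ

noncomputable def Term.val (κ : Fin n → ℝ) (f : (Fin n → ℝ) → ℂ) (t : Term n)
    (p : ℝ × (Fin n → ℝ)) : ℂ :=
  (t.c * p.1 ^ t.r * ∏ i, p.2 i ^ t.β i) • mixedPartial (bas n) t.γ f (dil κ p)

noncomputable def dT (κ : Fin n → ℝ) (j : Fin (n + 1)) (t : Term n) : List (Term n) :=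
  Fin.cases
    (⟨t.c * t.r, t.r - 1, t.β, t.γ⟩ ::
      List.ofFn fun i : Fin n =>
        ⟨t.c * κ i, t.r + (κ i - 1), t.β + Pi.single i 1, t.γ + Pi.single i 1⟩)
    (fun j => [⟨t.c * t.β j, t.r, t.β - Pi.single j 1, t.γ⟩,
               ⟨t.c, t.r + κ j, t.β, t.γ + Pi.single j 1⟩]) j

noncomputable def sval (κ : Fin n → ℝ) (f : (Fin n → ℝ) → ℂ) (L : List (Term n))
    (p : ℝ × (Fin n → ℝ)) : ℂ := (L.map fun t => t.val κ f p).sum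

lemma hasFDerivAt_rpow_fst {r : ℝ} {p : ℝ × (Fin n → ℝ)} (hp : 0 < p.1) :
    HasFDerivAt (fun q : ℝ × (Fin n → ℝ) => q.1 ^ r)
      ((r * p.1 ^ (r - 1)) • ContinuousLinearMap.fst ℝ ℝ (Fin n → ℝ)) p :=
  (Real.hasDerivAt_rpow_const (Or.inl hp.ne')).comp_hasFDerivAt p hasFDerivAt_fst

noncomputable def monoD (β : Fin n → ℕ) (x : Fin n → ℝ) : (Fin n → ℝ) →L[ℝ] ℝ :=
  ∑ i, (∏ k ∈ Finset.univ.erase i, x k ^ β k) •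
    (((β i : ℝ) * x i ^ (β i - 1)) • ContinuousLinearMap.proj i)

lemma hasFDerivAt_mono (β : Fin n → ℕ) (x : Fin n → ℝ) :
    HasFDerivAt (fun y : Fin n → ℝ => ∏ i, y i ^ β i) (monoD β x) x := by
  exact HasFDerivAt.finset_prod fun i _ =>
    (hasDerivAt_pow (β i) (x i)).comp_hasFDerivAt x (hasFDerivAt_apply i x)

noncomputable def dilD (κ : Fin n → ℝ) (p : ℝ × (Fin n → ℝ)) :
    (ℝ × (Fin n → ℝ)) →L[ℝ] (Fin n → ℝ) :=
  ContinuousLinearMap.pi fun i =>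
    p.1 ^ κ i •
        ((ContinuousLinearMap.proj i).comp (ContinuousLinearMap.snd ℝ ℝ (Fin n → ℝ)))
      + p.2 i • ((κ i * p.1 ^ (κ i - 1)) • ContinuousLinearMap.fst ℝ ℝ (Fin n → ℝ))

lemma hasFDerivAt_dil (κ : Fin n → ℝ) {p : ℝ × (Fin n → ℝ)} (hp : 0 < p.1) :
    HasFDerivAt (dil κ) (dilD κ p) p := by
  apply hasFDerivAt_pi.2
  intro i
  exact (hasFDerivAt_rpow_fst hp).mul
    (((ContinuousLinearMap.proj i).comp (ContinuousLinearMap.snd ℝ ℝ (Fin n → ℝ))).hasFDerivAt)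

noncomputable def valD (κ : Fin n → ℝ) (f : (Fin n → ℝ) → ℂ) (t : Term n)
    (p : ℝ × (Fin n → ℝ)) : (ℝ × (Fin n → ℝ)) →L[ℝ] ℂ :=
  (t.c * p.1 ^ t.r * ∏ i, p.2 i ^ t.β i) •
      ((fderiv ℝ (mixedPartial (bas n) t.γ f) (dil κ p)).comp (dilD κ p))
    + ((t.c * p.1 ^ t.r) •
          ((monoD t.β p.2).comp (ContinuousLinearMap.snd ℝ ℝ (Fin n → ℝ)))
        + (∏ i, p.2 i ^ t.β i) •
          (t.c • ((t.r * p.1 ^ (t.r - 1)) • ContinuousLinearMap.fst ℝ ℝ (Fin n → ℝ)))).smulRight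
        (mixedPartial (bas n) t.γ f (dil κ p))

lemma hasFDerivAt_val (κ : Fin n → ℝ) {f : (Fin n → ℝ) → ℂ} (hf : ContDiff ℝ (⊤ : ℕ∞) f) (t : Term n)
    {p : ℝ × (Fin n → ℝ)} (hp : 0 < p.1) :
    HasFDerivAt (Term.val κ f t) (valD κ f t p) p := by
  have h1 : HasFDerivAt (fun q : ℝ × (Fin n → ℝ) => t.c * q.1 ^ t.r)
      (t.c • ((t.r * p.1 ^ (t.r - 1)) • ContinuousLinearMap.fst ℝ ℝ (Fin n → ℝ))) p :=
    (hasFDerivAt_rpow_fst hp).const_mul t.c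
  have h2 : HasFDerivAt (fun q : ℝ × (Fin n → ℝ) => ∏ i, q.2 i ^ t.β i)
      ((monoD t.β p.2).comp (ContinuousLinearMap.snd ℝ ℝ (Fin n → ℝ))) p :=
    (hasFDerivAt_mono t.β p.2).comp p hasFDerivAt_snd
  have h3 : HasFDerivAt (fun q : ℝ × (Fin n → ℝ) => mixedPartial (bas n) t.γ f (dil κ q))
      ((fderiv ℝ (mixedPartial (bas n) t.γ f) (dil κ p)).comp (dilD κ p)) p :=
    (((mixedPartial_contDiff hf (bas n) t.γ).differentiable (by simp) (dil κ p)).hasFDerivAt).comp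
      p (hasFDerivAt_dil κ hp)
  have := (h1.mul h2).smul h3
  unfold Term.val valD
  exact this

lemma fderiv_mixedPartial_apply {f : (Fin n → ℝ) → ℂ} (hf : ContDiff ℝ (⊤ : ℕ∞) f)
    (γ : Fin n → ℕ) (y w : Fin n → ℝ) :
    fderiv ℝ (mixedPartial (bas n) γ f) y w
      = ∑ i, w i • mixedPartial (bas n) (γ + Pi.single i 1) f y := by
  have hw : w = ∑ i, w i • bas n i := by
    funext k
    simp [bas, Pi.single_apply]
  conv_lhs => rw [hw]
  rw [map_sum]
  apply Finset.sum_congr rfl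
  intro i _
  rw [map_smul]
  congr 1
  exact congrFun (Dv_mixedPartial hf (bas n) γ i) y


lemma mono_add_single (x : Fin n → ℝ) (β : Fin n → ℕ) (i : Fin n) :
    ∏ k, x k ^ ((β + (Pi.single i 1 : Fin n → ℕ)) k) = (∏ k, x k ^ β k) * x i := by
  have h : ∀ k : Fin n, x k ^ ((β + (Pi.single i 1 : Fin n → ℕ)) k)
      = x k ^ β k * x k ^ ((Pi.single i 1 : Fin n → ℕ) k) := by
    intro k
    rw [Pi.add_apply, pow_add]
  rw [Finset.prod_congr rfl fun k _ => h k, Finset.prod_mul_distrib]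
  congr 1
  rw [Finset.prod_eq_single i]
  · simp
  · intro k _ hk
    simp [Pi.single_apply, hk]
  · simp

lemma mono_deriv_eq (x : Fin n → ℝ) (β : Fin n → ℕ) (j : Fin n) :
    (∏ k ∈ Finset.univ.erase j, x k ^ β k) * ((β j : ℝ) * x j ^ (β j - 1))
      = (β j : ℝ) * ∏ k, x k ^ ((β - (Pi.single j 1 : Fin n → ℕ)) k) := by
  rcases Nat.eq_zero_or_pos (β j) with h | h
  · simp [h]
  · have key : ∏ k, x k ^ ((β - (Pi.single j 1 : Fin n → ℕ)) k)
        = x j ^ (β j - 1) * ∏ k ∈ Finset.univ.erase j, x k ^ β k := by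
      rw [← Finset.mul_prod_erase Finset.univ _ (Finset.mem_univ j)]
      congr 1
      · congr 1
        simp
      · apply Finset.prod_congr rfl
        intro k hk
        congr 1
        have hkj : k ≠ j := Finset.ne_of_mem_erase hk
        simp [Pi.single_apply, hkj]
    rw [key]; ring

lemma fderiv_val_eq (κ : Fin n → ℝ) {f : (Fin n → ℝ) → ℂ} (hf : ContDiff ℝ (⊤ : ℕ∞) f) (t : Term n)
    {p : ℝ × (Fin n → ℝ)} (hp : 0 < p.1) (j : Fin (n + 1)) :
    fderiv ℝ (Term.val κ f t) p (dirs n j) = sval κ f (dT κ j t) p := by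
  rw [(hasFDerivAt_val κ hf t hp).fderiv]
  induction j using Fin.cases with
  | zero =>
    have hd : dirs n 0 = ((1 : ℝ), (0 : Fin n → ℝ)) := rfl
    rw [hd]
    unfold valD
    rw [ContinuousLinearMap.add_apply, ContinuousLinearMap.smul_apply,
      ContinuousLinearMap.comp_apply, fderiv_mixedPartial_apply hf]
    simp only [dT, Fin.cases_zero, sval, List.map_cons, List.map_ofFn, List.sum_cons,
      List.sum_ofFn, Term.val, dilD, ContinuousLinearMap.pi_apply, ContinuousLinearMap.add_apply,
      ContinuousLinearMap.smul_apply, ContinuousLinearMap.comp_apply,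
      ContinuousLinearMap.smulRight_apply, ContinuousLinearMap.coe_fst',
      ContinuousLinearMap.coe_snd', ContinuousLinearMap.proj_apply, map_zero,
      smul_eq_mul, mul_zero, zero_add, mul_one, zero_mul, add_zero, Function.comp]
    rw [Finset.smul_sum, add_comm]
    congr 1
    · congr 1
      ring
    · apply Finset.sum_congr rfl
      intro i _
      rw [smul_smul]
      congr 1
      rw [Real.rpow_add hp, mono_add_single]
      ring
  | succ j =>
    have hd : dirs n j.succ = ((0 : ℝ), (Pi.single j 1 : Fin n → ℝ)) := rfl
    rw [hd]
    unfold valD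
    rw [ContinuousLinearMap.add_apply, ContinuousLinearMap.smul_apply,
      ContinuousLinearMap.comp_apply, fderiv_mixedPartial_apply hf]
    simp only [dT, Fin.cases_succ, sval, List.map_cons, List.sum_cons, List.map_nil,
      List.sum_nil, Term.val, dilD, ContinuousLinearMap.pi_apply, ContinuousLinearMap.add_apply,
      ContinuousLinearMap.smul_apply, ContinuousLinearMap.comp_apply,
      ContinuousLinearMap.smulRight_apply, ContinuousLinearMap.coe_fst',
      ContinuousLinearMap.coe_snd', ContinuousLinearMap.proj_apply, monoD,
      ContinuousLinearMap.sum_apply, map_zero,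
      smul_eq_mul, mul_zero, zero_add, mul_one, zero_mul, add_zero]
    rw [Finset.sum_eq_single j ?h1 ?h2, Finset.sum_eq_single j ?h3 ?h4]
    case h1 =>
      intro b _ hb
      have : (Pi.single j 1 : Fin n → ℝ) b = 0 := Pi.single_eq_of_ne hb 1
      rw [this, mul_zero, zero_smul]
    case h2 => intro h; exact absurd (Finset.mem_univ j) h
    case h3 =>
      intro b _ hb
      have : (Pi.single j 1 : Fin n → ℝ) b = 0 := Pi.single_eq_of_ne hb 1
      rw [this, mul_zero, mul_zero]
    case h4 => intro h; exact absurd (Finset.mem_univ j) h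
    rw [Pi.single_eq_same, add_comm]
    congr 1
    · rw [mul_one, mono_deriv_eq]
      congr 1
      ring
    · rw [mul_one, smul_smul]
      congr 1
      rw [Real.rpow_add hp]
      ring


@[simp] lemma sval_nil (κ : Fin n → ℝ) (f : (Fin n → ℝ) → ℂ) (p : ℝ × (Fin n → ℝ)) :
    sval κ f [] p = 0 := rfl

lemma sval_cons (κ : Fin n → ℝ) (f : (Fin n → ℝ) → ℂ) (t : Term n) (L : List (Term n))
    (p : ℝ × (Fin n → ℝ)) : sval κ f (t :: L) p = t.val κ f p + sval κ f L p := by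
  simp [sval]

lemma sval_append (κ : Fin n → ℝ) (f : (Fin n → ℝ) → ℂ) (L1 L2 : List (Term n))
    (p : ℝ × (Fin n → ℝ)) : sval κ f (L1 ++ L2) p = sval κ f L1 p + sval κ f L2 p := by
  simp [sval]

lemma differentiableAt_sval (κ : Fin n → ℝ) {f : (Fin n → ℝ) → ℂ} (hf : ContDiff ℝ (⊤ : ℕ∞) f)
    (L : List (Term n)) {p : ℝ × (Fin n → ℝ)} (hp : 0 < p.1) :
    DifferentiableAt ℝ (sval κ f L) p := by
  induction L with
  | nil => exact differentiableAt_const 0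
  | cons t L ih =>
    have : sval κ f (t :: L) = fun q => t.val κ f q + sval κ f L q :=
      funext fun q => sval_cons κ f t L q
    rw [this]
    exact ((hasFDerivAt_val κ hf t hp).differentiableAt).add ih

lemma fderiv_sval (κ : Fin n → ℝ) {f : (Fin n → ℝ) → ℂ} (hf : ContDiff ℝ (⊤ : ℕ∞) f)
    (L : List (Term n)) {p : ℝ × (Fin n → ℝ)} (hp : 0 < p.1) (j : Fin (n + 1)) :
    fderiv ℝ (sval κ f L) p (dirs n j) = sval κ f (L.flatMap (dT κ j)) p := by
  induction L with
  | nil =>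
    have : sval κ f ([] : List (Term n)) = fun _ => (0 : ℂ) := rfl
    rw [this]
    simp
  | cons t L ih =>
    have h1 : sval κ f (t :: L) = fun q => t.val κ f q + sval κ f L q :=
      funext fun q => sval_cons κ f t L q
    rw [h1, fderiv_fun_add ((hasFDerivAt_val κ hf t hp).differentiableAt)
      (differentiableAt_sval κ hf L hp)]
    rw [List.flatMap_cons, sval_append, ContinuousLinearMap.add_apply,
      fderiv_val_eq κ hf t hp j, ih]

/-- `g` agrees on the half space with a finite sum of elementary terms. -/
def Good (κ : Fin n → ℝ) (f : (Fin n → ℝ) → ℂ) (g : ℝ × (Fin n → ℝ) → ℂ) : Prop :=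
  ∃ L : List (Term n), ∀ p : ℝ × (Fin n → ℝ), 0 < p.1 → g p = sval κ f L p

lemma good_base (κ : Fin n → ℝ) (f : (Fin n → ℝ) → ℂ) :
    Good κ f (fun p : ℝ × (Fin n → ℝ) => f fun i => p.1 ^ κ i * p.2 i) := by
  refine ⟨[⟨1, 0, 0, 0⟩], fun p hp => ?_⟩
  rw [sval_cons, sval_nil, add_zero]
  show f (dil κ p) = _
  rw [Term.val]
  simp [mixedPartial_zero]

lemma good_Dv (κ : Fin n → ℝ) {f : (Fin n → ℝ) → ℂ} (hf : ContDiff ℝ (⊤ : ℕ∞) f)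
    (j : Fin (n + 1)) {g : ℝ × (Fin n → ℝ) → ℂ} (hg : Good κ f g) :
    Good κ f (Dv (dirs n j) g) := by
  obtain ⟨L, hL⟩ := hg
  refine ⟨L.flatMap (dT κ j), fun p hp => ?_⟩
  have hev : g =ᶠ[nhds p] sval κ f L := by
    have hopen : IsOpen {q : ℝ × (Fin n → ℝ) | 0 < q.1} :=
      isOpen_lt continuous_const continuous_fst
    filter_upwards [hopen.mem_nhds hp] with q hq
    exact hL q hq
  show fderiv ℝ g p (dirs n j) = _
  rw [hev.fderiv_eq, fderiv_sval κ hf L hp j]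

end Specific

section Bounds

variable {n : ℕ}

lemma rpow_le_sum {lam : ℝ} (hl : 0 < lam) {s c : ℝ} (h : |s| ≤ c) :
    lam ^ s ≤ lam ^ c + lam ^ (-c) := by
  rcases le_total 1 lam with h1 | h1
  · refine le_add_of_le_of_nonneg ?_ (Real.rpow_nonneg hl.le _)
    exact Real.rpow_le_rpow_of_exponent_le h1 ((le_abs_self s).trans h)
  · refine le_add_of_nonneg_of_le (Real.rpow_nonneg hl.le _) ?_
    exact Real.rpow_le_rpow_of_exponent_ge hl h1 (neg_le_of_abs_le h)

lemma one_le_rsum {lam : ℝ} (hl : 0 < lam) {c : ℝ} (hc : 0 ≤ c) :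
    1 ≤ lam ^ c + lam ^ (-c) := by
  have := rpow_le_sum hl (s := 0) (c := c) (by simpa using hc)
  simpa using this

lemma my_add_pow_le {a b : ℝ} (ha : 0 ≤ a) (hb : 0 ≤ b) (m : ℕ) :
    (a + b) ^ m ≤ 2 ^ m * (a ^ m + b ^ m) := by
  calc (a + b) ^ m ≤ (2 * max a b) ^ m := by
        apply pow_le_pow_left₀ (by positivity)
        calc a + b ≤ max a b + max a b := add_le_add (le_max_left a b) (le_max_right a b)
          _ = 2 * max a b := (two_mul _).symm
    _ = 2 ^ m * max a b ^ m := mul_pow 2 (max a b) m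
    _ ≤ 2 ^ m * (a ^ m + b ^ m) := by
        apply mul_le_mul_of_nonneg_left ?_ (by positivity)
        rcases le_total a b with h | h
        · rw [max_eq_right h]; exact le_add_of_nonneg_of_le (by positivity) le_rfl
        · rw [max_eq_left h]; exact le_add_of_le_of_nonneg le_rfl (by positivity)

lemma nat_rpow_le (hl : (0:ℝ) < lam) {l l' : ℕ} (h : l ≤ l') :
    lam ^ l ≤ lam ^ l' + (lam ^ l')⁻¹ := by
  have := rpow_le_sum hl (s := (l : ℝ)) (c := (l' : ℝ))
    (by rw [abs_of_nonneg (by positivity)]; exact_mod_cast h)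
  rwa [Real.rpow_natCast, Real.rpow_natCast, Real.rpow_neg hl.le, Real.rpow_natCast] at this

lemma nat_rpow_inv_le (hl : (0:ℝ) < lam) {l l' : ℕ} (h : l ≤ l') :
    (lam ^ l)⁻¹ ≤ lam ^ l' + (lam ^ l')⁻¹ := by
  have := rpow_le_sum hl (s := -(l : ℝ)) (c := (l' : ℝ))
    (by rw [abs_neg, abs_of_nonneg (by positivity)]; exact_mod_cast h)
  rwa [Real.rpow_neg hl.le, Real.rpow_natCast, Real.rpow_natCast,
    Real.rpow_neg hl.le, Real.rpow_natCast] at this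

lemma bound_mono {lam : ℝ} (hl : 0 < lam) {l l' : ℕ} (h : l ≤ l') :
    1 + lam ^ l + (lam ^ l)⁻¹ ≤ 3 * (1 + lam ^ l' + (lam ^ l')⁻¹) := by
  have h1 := nat_rpow_le hl h
  have h2 := nat_rpow_inv_le hl h
  have h3 : (0:ℝ) ≤ lam ^ l' := by positivity
  have h4 : (0:ℝ) ≤ (lam ^ l')⁻¹ := by positivity
  linarith

lemma val_bound (κ : Fin n → ℝ) {f : (Fin n → ℝ) → ℂ} (hκ : ∀ i, 0 < κ i)
    (hgrowth : ∀ γ : Fin n → ℕ, ∃ C : ℝ, 0 < C ∧ ∃ m : ℕ, ∀ y : Fin n → ℝ,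
      ‖mixedPartial (bas n) γ f y‖ ≤ C * (1 + ‖y‖) ^ m)
    (t : Term n) :
    ∃ (l m : ℕ) (C : ℝ), 0 < C ∧ ∀ p : ℝ × (Fin n → ℝ), 0 < p.1 →
      ‖t.val κ f p‖ ≤ C * (1 + p.1 ^ l + (p.1 ^ l)⁻¹) * (1 + ‖p.2‖) ^ m := by
  obtain ⟨C0, hC0, m0, hgr⟩ := hgrowth t.γ
  set K : ℕ := ⌈∑ i, κ i⌉₊ with hKdef
  have hK : ∀ i, κ i ≤ (K : ℝ) := fun i =>
    le_trans (Finset.single_le_sum (fun j _ => (hκ j).le) (Finset.mem_univ i)) (Nat.le_ceil _)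
  set l : ℕ := ⌈|t.r|⌉₊ + K * m0 with hldef
  set B : ℕ := ∑ i, t.β i with hBdef
  refine ⟨l, B + m0, |t.c| * C0 * 2 ^ m0 * 2 + 1, by positivity, ?_⟩
  intro p hp
  set lam := p.1
  set x := p.2
  have hx1 : (1:ℝ) ≤ 1 + ‖x‖ := by linarith [norm_nonneg x]
  set D : ℝ := lam ^ ((K : ℝ)) + lam ^ (-(K : ℝ)) with hDdef
  have hD0 : 0 < D := by positivity
  have hD1 : 1 ≤ D := one_le_rsum hp (by positivity)
  have hdil : ‖dil κ p‖ ≤ D * ‖x‖ := by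
    apply (pi_norm_le_iff_of_nonneg (by positivity)).2
    intro i
    show |lam ^ κ i * x i| ≤ D * ‖x‖
    rw [abs_mul, abs_of_pos (Real.rpow_pos_of_pos hp _)]
    apply mul_le_mul ?_ (norm_le_pi_norm x i) (abs_nonneg _) hD0.le
    exact rpow_le_sum hp (by rw [abs_of_pos (hκ i)]; exact hK i)
  have h1dil : 1 + ‖dil κ p‖ ≤ D * (1 + ‖x‖) := by nlinarith [norm_nonneg x]
  have hpow : (1 + ‖dil κ p‖) ^ m0 ≤ D ^ m0 * (1 + ‖x‖) ^ m0 := by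
    rw [← mul_pow]
    exact pow_le_pow_left₀ (by positivity) h1dil m0
  have hDm : D ^ m0 ≤ 2 ^ m0 * (lam ^ ((K * m0 : ℕ) : ℝ) + lam ^ (-((K * m0 : ℕ) : ℝ))) := by
    refine le_trans (my_add_pow_le (by positivity) (by positivity) m0) ?_
    apply mul_le_mul_of_nonneg_left ?_ (by positivity)
    have e1 : (lam ^ ((K:ℝ))) ^ m0 = lam ^ ((K * m0 : ℕ) : ℝ) := by
      rw [← Real.rpow_natCast (lam ^ ((K:ℝ))) m0, ← Real.rpow_mul hp.le]
      push_cast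
      ring_nf
    have e2 : (lam ^ (-(K:ℝ))) ^ m0 = lam ^ (-((K * m0 : ℕ) : ℝ)) := by
      rw [← Real.rpow_natCast (lam ^ (-(K:ℝ))) m0, ← Real.rpow_mul hp.le]
      push_cast
      ring_nf
    rw [e1, e2]
  have hmono : ∏ i, |x i| ^ t.β i ≤ (1 + ‖x‖) ^ B := by
    rw [hBdef, ← Finset.prod_pow_eq_pow_sum]
    apply Finset.prod_le_prod (fun i _ => by positivity)
    intro i _
    exact pow_le_pow_left₀ (abs_nonneg _) (le_trans (norm_le_pi_norm x i) (by linarith [norm_nonneg x])) _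
  have hr : lam ^ t.r * (lam ^ ((K * m0 : ℕ) : ℝ) + lam ^ (-((K * m0 : ℕ) : ℝ)))
      ≤ 2 * (lam ^ l + (lam ^ l)⁻¹) := by
    rw [mul_add, ← Real.rpow_add hp, ← Real.rpow_add hp]
    have hb1 : lam ^ (t.r + ((K * m0 : ℕ) : ℝ)) ≤ lam ^ ((l:ℝ)) + lam ^ (-(l:ℝ)) := by
      apply rpow_le_sum hp
      have := Nat.le_ceil |t.r|
      calc |t.r + ((K * m0 : ℕ) : ℝ)| ≤ |t.r| + ((K * m0 : ℕ) : ℝ) := by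
            refine le_trans (abs_add_le _ _) ?_
            rw [abs_of_nonneg (by positivity : (0:ℝ) ≤ ((K * m0 : ℕ) : ℝ))]
        _ ≤ (l : ℝ) := by rw [hldef]; push_cast; linarith
    have hb2 : lam ^ (t.r + -((K * m0 : ℕ) : ℝ)) ≤ lam ^ ((l:ℝ)) + lam ^ (-(l:ℝ)) := by
      apply rpow_le_sum hp
      have := Nat.le_ceil |t.r|
      calc |t.r + -((K * m0 : ℕ) : ℝ)| ≤ |t.r| + ((K * m0 : ℕ) : ℝ) := by
            refine le_trans (abs_add_le _ _) ?_
            rw [abs_neg, abs_of_nonneg (by positivity : (0:ℝ) ≤ ((K * m0 : ℕ) : ℝ))]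
        _ ≤ (l : ℝ) := by rw [hldef]; push_cast; linarith
    have e3 : lam ^ ((l:ℝ)) = lam ^ l := Real.rpow_natCast lam l
    have e4 : lam ^ (-(l:ℝ)) = (lam ^ l)⁻¹ := by
      rw [Real.rpow_neg hp.le, Real.rpow_natCast]
    rw [e3, e4] at hb1 hb2
    linarith
  have hM := hgr (dil κ p)
  calc ‖t.val κ f p‖
      = |t.c| * (lam ^ t.r * ∏ i, |x i| ^ t.β i) * ‖mixedPartial (bas n) t.γ f (dil κ p)‖ := by
        rw [Term.val, norm_smul, Real.norm_eq_abs, abs_mul, abs_mul,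
          abs_of_pos (Real.rpow_pos_of_pos hp _), Finset.abs_prod]
        simp only [abs_pow]
        ring
    _ ≤ |t.c| * (lam ^ t.r * (1 + ‖x‖) ^ B) * (C0 * (1 + ‖dil κ p‖) ^ m0) := by
        have hrp : (0:ℝ) < lam ^ t.r := Real.rpow_pos_of_pos hp _
        gcongr
    _ ≤ |t.c| * (lam ^ t.r * (1 + ‖x‖) ^ B) * (C0 * (D ^ m0 * (1 + ‖x‖) ^ m0)) := by
        have hrp : (0:ℝ) < lam ^ t.r := Real.rpow_pos_of_pos hp _
        gcongr
    _ = |t.c| * C0 * (lam ^ t.r * D ^ m0) * ((1 + ‖x‖) ^ B * (1 + ‖x‖) ^ m0) := by ring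
    _ ≤ |t.c| * C0 * (lam ^ t.r * (2 ^ m0 * (lam ^ ((K * m0 : ℕ) : ℝ) + lam ^ (-((K * m0 : ℕ) : ℝ)))))
          * ((1 + ‖x‖) ^ B * (1 + ‖x‖) ^ m0) := by
        have hrp : (0:ℝ) < lam ^ t.r := Real.rpow_pos_of_pos hp _
        gcongr
    _ = |t.c| * C0 * 2 ^ m0
          * (lam ^ t.r * (lam ^ ((K * m0 : ℕ) : ℝ) + lam ^ (-((K * m0 : ℕ) : ℝ))))
          * (1 + ‖x‖) ^ (B + m0) := by rw [pow_add]; ring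
    _ ≤ |t.c| * C0 * 2 ^ m0 * (2 * (lam ^ l + (lam ^ l)⁻¹)) * (1 + ‖x‖) ^ (B + m0) := by
        gcongr
    _ = (|t.c| * C0 * 2 ^ m0 * 2) * (lam ^ l + (lam ^ l)⁻¹) * (1 + ‖x‖) ^ (B + m0) := by ring
    _ ≤ (|t.c| * C0 * 2 ^ m0 * 2 + 1) * (1 + lam ^ l + (lam ^ l)⁻¹) * (1 + ‖x‖) ^ (B + m0) := by
        gcongr
        · linarith
        · linarith [pow_pos hp l, inv_pos.2 (pow_pos hp l)]

lemma sval_bound (κ : Fin n → ℝ) {f : (Fin n → ℝ) → ℂ} (hκ : ∀ i, 0 < κ i)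
    (hgrowth : ∀ γ : Fin n → ℕ, ∃ C : ℝ, 0 < C ∧ ∃ m : ℕ, ∀ y : Fin n → ℝ,
      ‖mixedPartial (bas n) γ f y‖ ≤ C * (1 + ‖y‖) ^ m)
    (L : List (Term n)) :
    ∃ (l m : ℕ) (C : ℝ), 0 < C ∧ ∀ p : ℝ × (Fin n → ℝ), 0 < p.1 →
      ‖sval κ f L p‖ ≤ C * (1 + p.1 ^ l + (p.1 ^ l)⁻¹) * (1 + ‖p.2‖) ^ m := by
  induction L with
  | nil =>
    refine ⟨0, 0, 1, one_pos, fun p hp => ?_⟩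
    simp only [sval_nil, norm_zero]
    positivity
  | cons t L ih =>
    obtain ⟨l1, m1, C1, hC1, h1⟩ := val_bound κ hκ hgrowth t
    obtain ⟨l2, m2, C2, hC2, h2⟩ := ih
    refine ⟨max l1 l2, max m1 m2, 3 * C1 + 3 * C2, by positivity, fun p hp => ?_⟩
    have hx1 : (1:ℝ) ≤ 1 + ‖p.2‖ := by linarith [norm_nonneg p.2]
    calc ‖sval κ f (t :: L) p‖ ≤ ‖t.val κ f p‖ + ‖sval κ f L p‖ := by
          rw [sval_cons]; exact norm_add_le _ _
      _ ≤ C1 * (1 + p.1 ^ l1 + (p.1 ^ l1)⁻¹) * (1 + ‖p.2‖) ^ m1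
          + C2 * (1 + p.1 ^ l2 + (p.1 ^ l2)⁻¹) * (1 + ‖p.2‖) ^ m2 :=
          add_le_add (h1 p hp) (h2 p hp)
      _ ≤ C1 * (3 * (1 + p.1 ^ (max l1 l2) + (p.1 ^ (max l1 l2))⁻¹)) * (1 + ‖p.2‖) ^ (max m1 m2)
          + C2 * (3 * (1 + p.1 ^ (max l1 l2) + (p.1 ^ (max l1 l2))⁻¹)) * (1 + ‖p.2‖) ^ (max m1 m2) := by
          apply add_le_add
          · exact mul_le_mul (mul_le_mul_of_nonneg_left (bound_mono hp (le_max_left l1 l2)) hC1.le)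
              (pow_le_pow_right₀ hx1 (le_max_left m1 m2)) (by positivity) (by positivity)
          · exact mul_le_mul (mul_le_mul_of_nonneg_left (bound_mono hp (le_max_right l1 l2)) hC2.le)
              (pow_le_pow_right₀ hx1 (le_max_right m1 m2)) (by positivity) (by positivity)
      _ = (3 * C1 + 3 * C2) * (1 + p.1 ^ (max l1 l2) + (p.1 ^ (max l1 l2))⁻¹)
          * (1 + ‖p.2‖) ^ (max m1 m2) := by ring

end Bounds

end DilProof

/-- If `f : ℝⁿ → ℂ` is smooth with temperate growth and `κ₁,…,κₙ > 0`, then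
`F(λ, x) = f (λ^{κ₁} x₁, …, λ^{κₙ} xₙ)` is smooth on `(0,∞) × ℝⁿ` and every mixed partial
`∂_λ^k ∂_x^α F` is bounded by `C (1 + λ^l + λ^{−l})(1 + ‖x‖)^m`. -/
theorem dilation_of_temperate_growth_is_slowly_increasing (n : ℕ)
    (κ : Fin n → ℝ) (hκ : ∀ i, 0 < κ i)
    (f : (Fin n → ℝ) → ℂ) (hf : ContDiff ℝ (⊤ : ℕ∞) f)
    (hgrowth : ∀ γ : Fin n → ℕ, ∃ C : ℝ, 0 < C ∧ ∃ m : ℕ, ∀ y : Fin n → ℝ,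
      ‖mixedPartial (fun i : Fin n => (Pi.single i 1 : Fin n → ℝ)) γ f y‖ ≤
        C * (1 + ‖y‖) ^ m) :
    ContDiffOn ℝ (⊤ : ℕ∞) (fun p : ℝ × (Fin n → ℝ) => f fun i => p.1 ^ κ i * p.2 i)
        (Set.Ioi (0 : ℝ) ×ˢ (Set.univ : Set (Fin n → ℝ))) ∧
    ∀ (k : ℕ) (α : Fin n → ℕ), ∃ (l m : ℕ) (C : ℝ), 0 < C ∧
      ∀ lam : ℝ, 0 < lam → ∀ x : Fin n → ℝ,
        ‖mixedPartial (dirs n) (Fin.cons k α)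
            (fun p : ℝ × (Fin n → ℝ) => f fun i => p.1 ^ κ i * p.2 i) (lam, x)‖ ≤
          C * (1 + lam ^ l + (lam ^ l)⁻¹) * (1 + ‖x‖) ^ m := by
  constructor
  · have hδ : ContDiffOn ℝ (⊤ : ℕ∞) (fun p : ℝ × (Fin n → ℝ) => fun i => p.1 ^ κ i * p.2 i)
        (Set.Ioi (0 : ℝ) ×ˢ (Set.univ : Set (Fin n → ℝ))) := by
      refine contDiffOn_pi.2 fun i => ?_
      intro p hp
      apply ContDiffAt.contDiffWithinAt
      have hp1 : p.1 ≠ 0 := ne_of_gt (Set.mem_Ioi.1 hp.1)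
      have h1 : ContDiffAt ℝ (⊤ : ℕ∞) (fun q : ℝ × (Fin n → ℝ) => q.1 ^ κ i) p :=
        (Real.contDiffAt_rpow_const_of_ne hp1).comp p contDiffAt_fst
      have h2 : ContDiffAt ℝ (⊤ : ℕ∞) (fun q : ℝ × (Fin n → ℝ) => q.2 i) p :=
        (((ContinuousLinearMap.proj i).comp
          (ContinuousLinearMap.snd ℝ ℝ (Fin n → ℝ))).contDiff).contDiffAt
      exact h1.mul h2
    exact hf.comp_contDiffOn hδ
  · intro k α
    have hgood : DilProof.Good κ f (mixedPartial (dirs n) (Fin.cons k α)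
        (fun p : ℝ × (Fin n → ℝ) => f fun i => p.1 ^ κ i * p.2 i)) :=
      DilProof.mixedPartial_closure (dirs n) (Fin.cons k α) (DilProof.good_base κ f)
        (fun j h hh => DilProof.good_Dv κ hf j hh)
    obtain ⟨L, hL⟩ := hgood
    obtain ⟨l, m, C, hC, hbound⟩ := DilProof.sval_bound κ hκ hgrowth L
    refine ⟨l, m, C, hC, fun lam hlam x => ?_⟩
    have := hL (lam, x) hlam
    rw [this]
    exact hbound (lam, x) hlam
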